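/- Let S be a generic subspace of H with principal standard vectors v^j = P_S e_j / ‖P_S e_j‖. Then |v^j|² = (|v^j_1|², |v^j_2|², …) is an extreme point of m_S. Moreover, if |v^j|² is a convex combination of |y|² and |z|² with y, z ∈ S of norm 1, then y and z are (unimodular) scalar multiples of v^j. -/

import Mathlib

open scoped InnerProductSpace
open ContinuousLinearMap

noncomputable section

variable {H : Type*} [NormedAddCommGroup H] [InnerProductSpace ℂ H] [CompleteSpace H]

/-- The orthogonal projection onto `S`, as an operator `H →L[ℂ] H`. -/
def projOp (S : Submodule ℂ H) [S.HasOrthogonalProjection] : H →L[ℂ] H :=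
  S.subtypeL ∘L S.orthogonalProjectionOnto

/-- The diagonal of `T` with respect to the fixed orthonormal basis `e`. -/
def diagSeq (e : HilbertBasis ℕ ℂ H) (T : H →L[ℂ] H) : ℕ → ℝ :=
  fun i => (⟪T (e i), e i⟫_ℂ).re

/-- The (diagonal) trace of `T` with respect to the fixed orthonormal basis `e`. -/
def diagTr (e : HilbertBasis ℕ ℂ H) (T : H →L[ℂ] H) : ℝ :=
  ∑' i, (⟪T (e i), e i⟫_ℂ).re

/-- `ρ` is a density operator: a positive trace-class operator with trace one.
(For positive operators, being trace class is equivalent to being compact with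
summable diagonal in an orthonormal basis.) -/
def IsDensity (e : HilbertBasis ℕ ℂ H) (ρ : H →L[ℂ] H) : Prop :=
  IsCompactOperator ρ ∧ ρ.IsPositive ∧
    Summable (fun i => (⟪ρ (e i), e i⟫_ℂ).re) ∧ diagTr e ρ = 1

/-- `D_S`: the density operators supported in `S`, i.e. with `P_S Y = Y`. -/
def DOps (e : HilbertBasis ℕ ℂ H) (S : Submodule ℂ H) [S.HasOrthogonalProjection] :
    Set (H →L[ℂ] H) :=
  {Y | IsDensity e Y ∧ projOp S ∘L Y = Y}

/-- The moment set `m_S = Diag(D_S)`. -/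
def momentSet (e : HilbertBasis ℕ ℂ H) (S : Submodule ℂ H) [S.HasOrthogonalProjection] :
    Set (ℕ → ℝ) := diagSeq e '' DOps e S

/-- `|v|² = (|⟨v,e_i⟩|²)_i`. -/
def absSq (e : HilbertBasis ℕ ℂ H) (v : H) : ℕ → ℝ := fun i => ‖⟪e i, v⟫_ℂ‖ ^ 2

/-- `E_j = e_j ⊗ e_j`, the rank-one orthogonal projection onto `span{e_j}`. -/
def Eproj (e : HilbertBasis ℕ ℂ H) (j : ℕ) : H →L[ℂ] H :=
  (innerSL ℂ (e j)).smulRight (e j)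

/-- The joint numerical range of a sequence of operators. -/
def jnr (e : HilbertBasis ℕ ℂ H) (A : ℕ → (H →L[ℂ] H)) : Set (ℕ → ℝ) :=
  {w | ∃ ρ : H →L[ℂ] H, IsDensity e ρ ∧ ∀ j, w j = diagTr e (ρ ∘L A j)}

/-- The family `A_{S,E} = (P_S E_j P_S)_j`. -/
def ASE (e : HilbertBasis ℕ ℂ H) (S : Submodule ℂ H) [S.HasOrthogonalProjection] :
    ℕ → (H →L[ℂ] H) := fun j => projOp S ∘L Eproj e j ∘L projOp S

/-- The principal standard vector `v^j = P_S e_j / ‖P_S e_j‖`. -/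
def pvec (e : HilbertBasis ℕ ℂ H) (S : Submodule ℂ H) [S.HasOrthogonalProjection]
    (j : ℕ) : H :=
  ‖projOp S (e j)‖⁻¹ • projOp S (e j)

set_option linter.unusedSectionVars false
set_option maxHeartbeats 1000000

section Aux

variable (e : HilbertBasis ℕ ℂ H) (S : Submodule ℂ H) [S.HasOrthogonalProjection]

lemma projOp_symm (x y : H) : ⟪projOp S x, y⟫_ℂ = ⟪x, projOp S y⟫_ℂ :=
  Submodule.inner_starProjection_left_eq_right S x y

lemma projOp_mem (x : H) : projOp S x ∈ S := (S.orthogonalProjectionOnto x).2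

lemma projOp_eq_self {x : H} (hx : x ∈ S) : projOp S x = x := by
  show ((S.orthogonalProjectionOnto x : S) : H) = x
  exact Submodule.starProjection_eq_self_iff.mpr hx

lemma projOp_isSelfAdjoint : IsSelfAdjoint (projOp S) :=
  isSelfAdjoint_iff_isSymmetric.mpr (Submodule.starProjection_isSymmetric S)

lemma conj_mul_self_re (z : ℂ) : ((starRingEnd ℂ) z * z).re = ‖z‖ ^ 2 := by
  rw [mul_comm, Complex.mul_conj]
  rw [Complex.ofReal_re, Complex.normSq_eq_norm_sq]

lemma self_mul_conj_re (z : ℂ) : (z * (starRingEnd ℂ) z).re = ‖z‖ ^ 2 := by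
  rw [mul_comm]; exact conj_mul_self_re z

lemma hasSum_absSq (x : H) : HasSum (absSq e x) (‖x‖ ^ 2) := by
  have h := (e.hasSum_inner_mul_inner x x).mapL Complex.reCLM
  have h2 : (fun i => Complex.reCLM (⟪x, e i⟫_ℂ * ⟪e i, x⟫_ℂ)) = absSq e x := by
    funext i
    simp only [Complex.reCLM_apply, absSq]
    rw [← inner_conj_symm x (e i), conj_mul_self_re]
  have h3 : Complex.reCLM ⟪x, x⟫_ℂ = ‖x‖ ^ 2 := by
    rw [Complex.reCLM_apply, inner_self_eq_norm_sq_to_K]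
    norm_cast
  rwa [h2, h3] at h

lemma exists_sqrt {Y : H →L[ℂ] H} (hY : Y.IsPositive) :
    ∃ R : H →L[ℂ] H, (R : H →ₗ[ℂ] H).IsSymmetric ∧ R ∘L R = Y := by
  obtain ⟨R, hR1, -, hR3⟩ := CFC.exists_sqrt_of_isSelfAdjoint_of_quasispectrumRestricts
    hY.isSelfAdjoint hY.spectrumRestricts
  exact ⟨R, isSelfAdjoint_iff_isSymmetric.mp hR1, by rw [← hR3]; rfl⟩


/-- rank-one projection onto the line through `v`. -/
def rkOne (v : H) : H →L[ℂ] H := (innerSL ℂ v).smulRight v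

lemma rkOne_apply (v x : H) : rkOne v x = ⟪v, x⟫_ℂ • v := rfl

lemma rkOne_inner (v x y : H) : ⟪rkOne v x, y⟫_ℂ = ⟪x, v⟫_ℂ * ⟪v, y⟫_ℂ := by
  rw [rkOne_apply, inner_smul_left, inner_conj_symm]

lemma rkOne_diag (v : H) (i : ℕ) : (⟪rkOne v (e i), e i⟫_ℂ).re = absSq e v i := by
  rw [rkOne_inner, ← inner_conj_symm v (e i), self_mul_conj_re]
  rfl

lemma rkOne_isPositive (v : H) : (rkOne v).IsPositive := by
  constructor
  · intro x y
    show ⟪rkOne v x, y⟫_ℂ = ⟪x, rkOne v y⟫_ℂ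
    rw [rkOne_inner, rkOne_apply, inner_smul_right, mul_comm]
  · intro x
    rw [ContinuousLinearMap.reApplyInnerSelf, rkOne_inner, ← inner_conj_symm x v,
      RCLike.re_to_complex, conj_mul_self_re]
    positivity

lemma rkOne_isCompact (v : H) : IsCompactOperator (rkOne v) := by
  rw [isCompactOperator_iff_exists_mem_nhds_image_subset_compact]
  refine ⟨Metric.ball 0 1, Metric.ball_mem_nhds 0 one_pos,
    (fun c : ℂ => c • v) '' Metric.closedBall 0 ‖v‖, ?_, ?_⟩
  · exact (isCompact_closedBall 0 ‖v‖).image (by fun_prop)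
  · rintro - ⟨x, hx, rfl⟩
    refine ⟨⟪v, x⟫_ℂ, ?_, rfl⟩
    rw [Metric.mem_closedBall, dist_zero_right]
    calc ‖⟪v, x⟫_ℂ‖ ≤ ‖v‖ * ‖x‖ := norm_inner_le_norm v x
    _ ≤ ‖v‖ * 1 := by
        have := (Metric.mem_ball.mp hx)
        rw [dist_zero_right] at this
        exact mul_le_mul_of_nonneg_left this.le (norm_nonneg v)
    _ = ‖v‖ := mul_one _

lemma rkOne_hasSum_diag (v : H) :
    HasSum (fun i => (⟪rkOne v (e i), e i⟫_ℂ).re) (‖v‖ ^ 2) := by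
  have h := hasSum_absSq e v
  have : (fun i => (⟪rkOne v (e i), e i⟫_ℂ).re) = absSq e v := by
    funext i; exact rkOne_diag e v i
  rwa [this]


lemma inner_self_re (x : H) : (⟪x, x⟫_ℂ).re = ‖x‖ ^ 2 := by
  rw [← RCLike.re_to_complex]; exact inner_self_eq_norm_sq x

lemma diag_bound {Y : H →L[ℂ] H} (hY : Y.IsPositive)
    (hsum : Summable (fun i => (⟪Y (e i), e i⟫_ℂ).re)) (x : H) :
    (⟪Y x, x⟫_ℂ).re ≤ (∑' i, (⟪Y (e i), e i⟫_ℂ).re) * ‖x‖ ^ 2 := by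
  obtain ⟨R, hR, hRR⟩ := exists_sqrt hY
  have hRsym : ∀ z w : H, ⟪R z, w⟫_ℂ = ⟪z, R w⟫_ℂ := fun z w => hR z w
  have hYx : ∀ z w : H, ⟪Y z, w⟫_ℂ = ⟪R z, R w⟫_ℂ := by
    intro z w
    rw [← hRR, ContinuousLinearMap.comp_apply]
    exact hRsym (R z) w
  have hdiag : ∀ i, (⟪Y (e i), e i⟫_ℂ).re = ‖R (e i)‖ ^ 2 := by
    intro i; rw [hYx]; exact inner_self_re _
  have h1 := hasSum_absSq e (R x)
  have hterm : ∀ i, absSq e (R x) i ≤ (⟪Y (e i), e i⟫_ℂ).re * ‖x‖ ^ 2 := by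
    intro i
    have h2 : ‖⟪e i, R x⟫_ℂ‖ = ‖⟪R (e i), x⟫_ℂ‖ := by rw [hRsym (e i) x]
    calc absSq e (R x) i = ‖⟪R (e i), x⟫_ℂ‖ ^ 2 := by rw [absSq, h2]
    _ ≤ (‖R (e i)‖ * ‖x‖) ^ 2 := by
        have := norm_inner_le_norm (𝕜 := ℂ) (R (e i)) x
        have h0 : (0:ℝ) ≤ ‖⟪R (e i), x⟫_ℂ‖ := norm_nonneg _
        nlinarith
    _ = ‖R (e i)‖ ^ 2 * ‖x‖ ^ 2 := by ring
    _ = (⟪Y (e i), e i⟫_ℂ).re * ‖x‖ ^ 2 := by rw [hdiag i]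
  have hlhs : (⟪Y x, x⟫_ℂ).re = ‖R x‖ ^ 2 := by rw [hYx]; exact inner_self_re _
  rw [hlhs, ← h1.tsum_eq, ← tsum_mul_right]
  exact Summable.tsum_le_tsum hterm h1.summable (hsum.mul_right _)

lemma eig_of_max {Y : H →L[ℂ] H} (hY : Y.IsPositive)
    (hsum : Summable (fun i => (⟪Y (e i), e i⟫_ℂ).re))
    (htr : (∑' i, (⟪Y (e i), e i⟫_ℂ).re) = 1)
    {v : H} (hv : ‖v‖ = 1) (heq : (⟪Y v, v⟫_ℂ).re = 1) : Y v = v := by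
  have happ : ∀ x : H, (1 - Y : H →L[ℂ] H) x = x - Y x := fun x => rfl
  have hre : ∀ x : H, (⟪(1 - Y : H →L[ℂ] H) x, x⟫_ℂ).re = ‖x‖ ^ 2 - (⟪Y x, x⟫_ℂ).re := by
    intro x
    rw [happ, inner_sub_left, Complex.sub_re]
    congr 1
    exact inner_self_re x
  have hT : (1 - Y : H →L[ℂ] H).IsPositive := by
    constructor
    · exact isSelfAdjoint_iff_isSymmetric.mp ((IsSelfAdjoint.one (H →L[ℂ] H)).sub hY.isSelfAdjoint)
    · intro x
      rw [ContinuousLinearMap.reApplyInnerSelf, RCLike.re_to_complex, hre]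
      have hb := diag_bound e hY hsum x
      rw [htr, one_mul] at hb
      linarith
  obtain ⟨R, hR, hRR⟩ := exists_sqrt hT
  have hRsym : ∀ z w : H, ⟪R z, w⟫_ℂ = ⟪z, R w⟫_ℂ := fun z w => hR z w
  have h0 : ‖R v‖ ^ 2 = 0 := by
    have h1 : (⟪R v, R v⟫_ℂ).re = (⟪(1 - Y : H →L[ℂ] H) v, v⟫_ℂ).re := by
      rw [← hRR, ContinuousLinearMap.comp_apply, hRsym (R v) v]
    rw [← inner_self_re (R v), h1, hre, hv, heq]
    norm_num
  have hRv : R v = 0 := by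
    have := pow_eq_zero_iff (n := 2) (by norm_num) |>.mp h0
    exact norm_eq_zero.mp this
  have : (1 - Y : H →L[ℂ] H) v = 0 := by
    rw [← hRR, ContinuousLinearMap.comp_apply, hRv, map_zero]
  rw [happ] at this
  linear_combination (norm := abel) -this

lemma diag_of_eig {Y : H →L[ℂ] H} (hY : Y.IsPositive)
    (hsum : Summable (fun i => (⟪Y (e i), e i⟫_ℂ).re))
    (htr : (∑' i, (⟪Y (e i), e i⟫_ℂ).re) = 1)
    {v : H} (hv : ‖v‖ = 1) (heig : Y v = v) (i : ℕ) :
    (⟪Y (e i), e i⟫_ℂ).re = absSq e v i := by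
  have hsymY' : (Y : H →ₗ[ℂ] H).IsSymmetric :=
    isSelfAdjoint_iff_isSymmetric.mp hY.isSelfAdjoint
  have hsymY : ∀ z w : H, ⟪Y z, w⟫_ℂ = ⟪z, Y w⟫_ℂ := fun z w => hsymY' z w
  have hvv : ⟪v, v⟫_ℂ = 1 := by
    rw [inner_self_eq_norm_sq_to_K, hv]; norm_num
  have key : ∀ x : H, 0 ≤ (⟪Y x, x⟫_ℂ).re - ‖⟪v, x⟫_ℂ‖ ^ 2 := by
    intro x
    set c : ℂ := ⟪v, x⟫_ℂ with hc
    have hxv : ⟪x, v⟫_ℂ = (starRingEnd ℂ) c := by rw [hc, inner_conj_symm]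
    have hYxv : ⟪Y x, v⟫_ℂ = (starRingEnd ℂ) c := by
      have := hsymY x v
      rw [this, heig, hxv]
    have expand : ⟪Y (x - c • v), x - c • v⟫_ℂ = ⟪Y x, x⟫_ℂ - c * (starRingEnd ℂ) c := by
      rw [map_sub, map_smul, heig, inner_sub_left, inner_sub_right, inner_sub_right,
        inner_smul_left, inner_smul_right, inner_smul_left, inner_smul_right, hvv, hYxv]
      rw [← hc]
      ring
    have hpos := hY.re_inner_nonneg_left (x - c • v)
    rw [RCLike.re_to_complex, expand, Complex.sub_re, self_mul_conj_re] at hpos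
    linarith
  have hd : ∀ k, 0 ≤ (⟪Y (e k), e k⟫_ℂ).re - absSq e v k := by
    intro k
    have := key (e k)
    have hn : ‖⟪v, e k⟫_ℂ‖ = ‖⟪e k, v⟫_ℂ‖ := by
      rw [← inner_conj_symm v (e k), RCLike.norm_conj]
    rw [hn] at this
    exact this
  have hsummable : Summable (fun k => (⟪Y (e k), e k⟫_ℂ).re - absSq e v k) :=
    hsum.sub (hasSum_absSq e v).summable
  have htotal : (∑' k, ((⟪Y (e k), e k⟫_ℂ).re - absSq e v k)) = 0 := by
    rw [Summable.tsum_sub hsum (hasSum_absSq e v).summable, htr, (hasSum_absSq e v).tsum_eq, hv]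
    norm_num
  have hle := Summable.le_tsum hsummable i (fun j _ => hd j)
  rw [htotal] at hle
  have := hd i
  linarith

lemma projOp_idem (x : H) : projOp S (projOp S x) = projOp S x :=
  projOp_eq_self S (projOp_mem S x)

lemma inner_ej (x : H) (hx : x ∈ S) (j : ℕ) :
    ⟪projOp S (e j), x⟫_ℂ = ⟪e j, x⟫_ℂ := by
  rw [projOp_symm S (e j) x, projOp_eq_self S hx]

lemma pvec_norm {j : ℕ} (hj : projOp S (e j) ≠ 0) : ‖pvec e S j‖ = 1 := by
  rw [pvec, norm_smul, norm_inv, norm_norm, inv_mul_cancel₀ (norm_ne_zero_iff.mpr hj)]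

lemma pvec_mem (j : ℕ) : pvec e S j ∈ S :=
  Submodule.smul_of_tower_mem S _ (projOp_mem S (e j))

lemma pvec_smul {j : ℕ} (hj : projOp S (e j) ≠ 0) :
    projOp S (e j) = (‖projOp S (e j)‖ : ℂ) • pvec e S j := by
  have h1 : ‖projOp S (e j)‖ ≠ 0 := norm_ne_zero_iff.mpr hj
  rw [pvec, ← Complex.coe_smul, smul_smul, ← Complex.ofReal_mul,
    mul_inv_cancel₀ h1, Complex.ofReal_one, one_smul]

lemma inner_ej_pvec {j : ℕ} (hj : projOp S (e j) ≠ 0) :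
    ⟪e j, pvec e S j⟫_ℂ = (‖projOp S (e j)‖ : ℂ) := by
  have h1 : ‖projOp S (e j)‖ ≠ 0 := norm_ne_zero_iff.mpr hj
  rw [← inner_ej e S (pvec e S j) (pvec_mem e S j) j, pvec, ← Complex.coe_smul,
    inner_smul_right, inner_self_eq_norm_sq_to_K]
  norm_cast
  rw [sq]
  field_simp
  norm_cast
  rw [one_div, sq]
  change Complex.ofReal _ * Complex.ofReal _ = _
  rw [← Complex.ofReal_mul, Algebra.algebraMap_self, RingHom.id_apply, inv_mul_cancel_left₀ h1]

lemma absSq_pvec {j : ℕ} (hj : projOp S (e j) ≠ 0) :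
    absSq e (pvec e S j) j = ‖projOp S (e j)‖ ^ 2 := by
  rw [absSq, inner_ej_pvec e S hj]
  simp [Real.norm_eq_abs, sq_abs]

lemma diag_j_eq {Y : H →L[ℂ] H} (hY : Y.IsPositive) (hPY : projOp S ∘L Y = Y) {j : ℕ}
    (hj : projOp S (e j) ≠ 0) :
    (⟪Y (e j), e j⟫_ℂ).re
      = ‖projOp S (e j)‖ ^ 2 * (⟪Y (pvec e S j), pvec e S j⟫_ℂ).re := by
  have hYP : Y ∘L projOp S = Y := by
    have h2 : Y ∘L projOp S = star (projOp S ∘L Y) := by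
      rw [← ContinuousLinearMap.mul_def, ← ContinuousLinearMap.mul_def, star_mul,
        hY.isSelfAdjoint.star_eq, (projOp_isSelfAdjoint S).star_eq]
    rw [h2, hPY, hY.isSelfAdjoint.star_eq]
  have happ : Y (projOp S (e j)) = Y (e j) := DFunLike.congr_fun hYP (e j)
  have happ2 : projOp S (Y (projOp S (e j))) = Y (projOp S (e j)) :=
    DFunLike.congr_fun hPY (projOp S (e j))
  have step : ⟪Y (e j), e j⟫_ℂ = ⟪Y (projOp S (e j)), projOp S (e j)⟫_ℂ := by
    rw [← happ, ← happ2, projOp_symm S _ (e j), happ2, ← projOp_symm S _ (e j)]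
  rw [step]
  conv_lhs => rw [pvec_smul e S hj, map_smul, inner_smul_left, inner_smul_right,
    Complex.conj_ofReal, ← mul_assoc, ← Complex.ofReal_mul, Complex.re_ofReal_mul, ← sq]

lemma rkOne_mem_DOps {v : H} (hv : v ∈ S) (hv1 : ‖v‖ = 1) : rkOne v ∈ DOps e S := by
  refine ⟨⟨rkOne_isCompact v, rkOne_isPositive v, (rkOne_hasSum_diag e v).summable, ?_⟩, ?_⟩
  · show (∑' i, (⟪rkOne v (e i), e i⟫_ℂ).re) = 1
    rw [(rkOne_hasSum_diag e v).tsum_eq, hv1]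
    norm_num
  · ext x
    show projOp S (⟪v, x⟫_ℂ • v) = ⟪v, x⟫_ℂ • v
    rw [map_smul, projOp_eq_self S hv]

end Aux

/-- `|v^j|²` is an extreme point of `m_S`; moreover if `|v^j|²` is a
(nontrivial) convex combination of `|y|²` and `|z|²` with `y, z ∈ S` of norm one, then
`y` and `z` are unimodular scalar multiples of `v^j`. -/
theorem stmt_11 (e : HilbertBasis ℕ ℂ H) (S : Submodule ℂ H) [S.HasOrthogonalProjection]
    (hgen : ∀ j, projOp S (e j) ≠ 0) (j : ℕ) :
    absSq e (pvec e S j) ∈ Set.extremePoints ℝ (momentSet e S) ∧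
    (∀ y z : H, y ∈ S → z ∈ S → ‖y‖ = 1 → ‖z‖ = 1 →
      ∀ a b : ℝ, 0 < a → 0 < b → a + b = 1 →
        absSq e (pvec e S j) = a • absSq e y + b • absSq e z →
        ∃ c d : ℂ, ‖c‖ = 1 ∧ ‖d‖ = 1 ∧ y = c • pvec e S j ∧ z = d • pvec e S j) := by
  have hj : projOp S (e j) ≠ 0 := hgen j
  have hr : ‖projOp S (e j)‖ ≠ 0 := norm_ne_zero_iff.mpr hj
  have hr2 : ‖projOp S (e j)‖ ^ 2 ≠ 0 := pow_ne_zero _ hr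
  have hv1 : ‖pvec e S j‖ = 1 := pvec_norm e S hj
  have hvS : pvec e S j ∈ S := pvec_mem e S j
  have hmem : absSq e (pvec e S j) ∈ momentSet e S := by
    refine ⟨rkOne (pvec e S j), rkOne_mem_DOps e S hvS hv1, ?_⟩
    funext i
    exact rkOne_diag e (pvec e S j) i
  have key : ∀ Y, Y ∈ DOps e S → diagSeq e Y j ≤ ‖projOp S (e j)‖ ^ 2 ∧
      (diagSeq e Y j = ‖projOp S (e j)‖ ^ 2 → diagSeq e Y = absSq e (pvec e S j)) := by
    rintro Y ⟨⟨hc, hpos, hsum, htr⟩, hPY⟩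
    replace htr : (∑' i, (⟪Y (e i), e i⟫_ℂ).re) = 1 := htr
    have hdj : diagSeq e Y j
        = ‖projOp S (e j)‖ ^ 2 * (⟪Y (pvec e S j), pvec e S j⟫_ℂ).re :=
      diag_j_eq e S hpos hPY hj
    have hb := diag_bound e hpos hsum (pvec e S j)
    rw [htr, one_mul, hv1, one_pow] at hb
    constructor
    · rw [hdj]
      nlinarith [sq_nonneg ‖projOp S (e j)‖]
    · intro heq
      rw [hdj] at heq
      have h1 : (⟪Y (pvec e S j), pvec e S j⟫_ℂ).re = 1 :=
        mul_left_cancel₀ hr2 (by rw [mul_one]; exact heq)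
      have heig := eig_of_max e hpos hsum htr hv1 h1
      funext i
      exact diag_of_eig e hpos hsum htr hv1 heig i
  constructor
  · refine ⟨hmem, ?_⟩
    rintro w₁ ⟨Y₁, hY₁, rfl⟩ w₂ ⟨Y₂, hY₂, rfl⟩ ⟨a, b, ha, hb, hab, habs⟩
    have k1 := key Y₁ hY₁
    have k2 := key Y₂ hY₂
    have hjj := congrFun habs j
    simp only [Pi.add_apply, Pi.smul_apply, smul_eq_mul] at hjj
    rw [absSq_pvec e S hj] at hjj
    have e1 : diagSeq e Y₁ j = ‖projOp S (e j)‖ ^ 2 := by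
      nlinarith [k1.1, k2.1, mul_le_mul_of_nonneg_left k2.1 hb.le,
        mul_le_mul_of_nonneg_left k1.1 ha.le]
    have e2 : diagSeq e Y₂ j = ‖projOp S (e j)‖ ^ 2 := by
      nlinarith [k1.1, k2.1, mul_le_mul_of_nonneg_left k2.1 hb.le,
        mul_le_mul_of_nonneg_left k1.1 ha.le]
    exact k1.2 e1
  · intro y z hyS hzS hy1 hz1 a b ha hb hab hcomb
    have bnd : ∀ y : H, y ∈ S → ‖y‖ = 1 →
        absSq e y j ≤ ‖projOp S (e j)‖ ^ 2 ∧
        (absSq e y j = ‖projOp S (e j)‖ ^ 2 →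
          ∃ c : ℂ, ‖c‖ = 1 ∧ y = c • pvec e S j) := by
      intro y hyS hy1
      have hinner : ⟪e j, y⟫_ℂ = ⟪projOp S (e j), y⟫_ℂ := (inner_ej e S y hyS j).symm
      have hcs : ‖⟪projOp S (e j), y⟫_ℂ‖ ≤ ‖projOp S (e j)‖ * ‖y‖ := norm_inner_le_norm _ _
      rw [hy1, mul_one] at hcs
      have habs : absSq e y j = ‖⟪projOp S (e j), y⟫_ℂ‖ ^ 2 := by rw [absSq, hinner]
      constructor
      · rw [habs]
        nlinarith [norm_nonneg ⟪projOp S (e j), y⟫_ℂ]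
      · intro heq
        rw [habs] at heq
        have hnorm : ‖⟪projOp S (e j), y⟫_ℂ‖ = ‖projOp S (e j)‖ * ‖y‖ := by
          rw [hy1, mul_one]
          have h2 := (sq_eq_sq_iff_abs_eq_abs (‖⟪projOp S (e j), y⟫_ℂ‖)
            ‖projOp S (e j)‖).mp heq
          rwa [abs_of_nonneg (norm_nonneg _), abs_of_nonneg (norm_nonneg _)] at h2
        have hy0 : y ≠ 0 := by
          intro h0; rw [h0, norm_zero] at hy1; exact one_ne_zero hy1.symm
        obtain ⟨c₀, hc₀, hyc⟩ := (norm_inner_eq_norm_iff hj hy0).mp hnorm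
        refine ⟨c₀ * (‖projOp S (e j)‖ : ℂ), ?_, ?_⟩
        · have hnc : ‖y‖ = ‖c₀ * (‖projOp S (e j)‖ : ℂ)‖ * ‖pvec e S j‖ := by
            rw [← norm_smul, ← smul_smul, ← pvec_smul e S hj, ← hyc]
          rw [hy1, hv1, mul_one] at hnc
          exact hnc.symm
        · rw [hyc]
          conv_lhs => rw [pvec_smul e S hj, smul_smul]
    have hjj := congrFun hcomb j
    simp only [Pi.add_apply, Pi.smul_apply, smul_eq_mul] at hjj
    rw [absSq_pvec e S hj] at hjj
    have b1 := bnd y hyS hy1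
    have b2 := bnd z hzS hz1
    have e1 : absSq e y j = ‖projOp S (e j)‖ ^ 2 := by
      nlinarith [b1.1, b2.1, mul_le_mul_of_nonneg_left b2.1 hb.le,
        mul_le_mul_of_nonneg_left b1.1 ha.le]
    have e2 : absSq e z j = ‖projOp S (e j)‖ ^ 2 := by
      nlinarith [b1.1, b2.1, mul_le_mul_of_nonneg_left b2.1 hb.le,
        mul_le_mul_of_nonneg_left b1.1 ha.le]
    obtain ⟨c, hc, hyc⟩ := b1.2 e1
    obtain ⟨d, hd, hzd⟩ := b2.2 e2
    exact ⟨c, d, hc, hd, hyc, hzd⟩
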